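/- Suppose U_1,…,U_L and V_1,…,V_L are orthogonal d×d real matrices with V_{l+1} = U_l for l ∈ {1,…,L−1} such that for every t ≥ 0 and every l ∈ {1,…,L}, U_lᵀ·W_l(t)·V_l = diag(W̃_l(t), ρ_l(t)·I_m) for some 2r×2r real matrix W̃_l(t) with W̃_l(0) = ε_l·I_{2r}. Write U_{l,1}, V_{l,1} for the first 2r columns of U_l, V_l. Define compressed iterates Ŵ_l(t) ∈ ℝ^{2r×2r} by Ŵ_l(0) := ε_l·I_{2r} and Ŵ_l(t+1) := (1 − ηλ)·Ŵ_l(t) − η·Ŵ_{L:l+1}(t)ᵀ·(Ŵ_{L:1}(t) − U_{L,1}ᵀ·Φ·V_{1,1})·Ŵ_{l−1:1}(t)ᵀ, where Ŵ_{j:i}(t) := Ŵ_j(t)⋯Ŵ_i(t) with empty products equal to I_{2r}. Then for every l ∈ {1,…,L} and every t ≥ 0: Ŵ_l(t) = U_{l,1}ᵀ·W_l(t)·V_{l,1} = W̃_l(t). -/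
import Mathlib


open Matrix BigOperators Filter

noncomputable section

/-- Auxiliary: product of `k` consecutive matrices ending (on the right) at index `i`. -/
def chainAux {n : Type*} [Fintype n] [DecidableEq n]
    (W : ℕ → Matrix n n ℝ) (i : ℕ) : ℕ → Matrix n n ℝ
  | 0 => 1
  | (k+1) => W (i + k) * chainAux W i k

/-- `chain W i j = W j * W (j-1) * ⋯ * W i`; equals `1` when `j < i` (empty product). -/
def chain {n : Type*} [Fintype n] [DecidableEq n]
    (W : ℕ → Matrix n n ℝ) (i j : ℕ) : Matrix n n ℝ :=
  chainAux W i (j + 1 - i)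

/-- `blockDiag r m A B` is the `(2r+m)×(2r+m)` block-diagonal matrix `diag(A, B)`
with top-left block `A` (of size `2r×2r`) and bottom-right block `B` (of size `m×m`). -/
def blockDiag (r m : ℕ) (A : Matrix (Fin (2*r)) (Fin (2*r)) ℝ)
    (B : Matrix (Fin m) (Fin m) ℝ) : Matrix (Fin (2*r + m)) (Fin (2*r + m)) ℝ :=
  Matrix.reindex finSumFinEquiv finSumFinEquiv (Matrix.fromBlocks A 0 0 B)

/-- The `d×2r` matrix formed by the first `2r` columns of a `(2r+m)×(2r+m)` matrix. -/
def cols1 (r m : ℕ) (U : Matrix (Fin (2*r + m)) (Fin (2*r + m)) ℝ) :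
    Matrix (Fin (2*r + m)) (Fin (2*r)) ℝ :=
  fun i j => U i (Fin.castAdd m j)

/-- The `d×m` matrix formed by the last `m` columns of a `(2r+m)×(2r+m)` matrix. -/
def cols2 (r m : ℕ) (U : Matrix (Fin (2*r + m)) (Fin (2*r + m)) ℝ) :
    Matrix (Fin (2*r + m)) (Fin m) ℝ :=
  fun i j => U i (Fin.natAdd (2*r) j)

/-- Squared Frobenius norm: `‖A‖_F² = trace(AᵀA)`. -/
def frobSq {p q : Type*} [Fintype p] [Fintype q] (A : Matrix p q ℝ) : ℝ :=
  Matrix.trace (Aᵀ * A)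

/-- Frobenius norm: `‖A‖_F = √(trace(AᵀA))`. -/
def frobNorm {p q : Type*} [Fintype p] [Fintype q] (A : Matrix p q ℝ) : ℝ :=
  Real.sqrt (Matrix.trace (Aᵀ * A))

def topLeft (r m : ℕ) (M : Matrix (Fin (2*r + m)) (Fin (2*r + m)) ℝ) :
    Matrix (Fin (2*r)) (Fin (2*r)) ℝ :=
  fun i j => M (Fin.castAdd m i) (Fin.castAdd m j)

lemma bd_cc (r m : ℕ) (A B) (i j : Fin (2*r)) :
    _root_.blockDiag r m A B (Fin.castAdd m i) (Fin.castAdd m j) = A i j := by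
  simp [_root_.blockDiag, Matrix.reindex_apply, Matrix.submatrix_apply,
    finSumFinEquiv_symm_apply_castAdd]

lemma bd_cn (r m : ℕ) (A B) (i : Fin (2*r)) (j : Fin m) :
    _root_.blockDiag r m A B (Fin.castAdd m i) (Fin.natAdd (2*r) j) = 0 := by
  simp [_root_.blockDiag, Matrix.reindex_apply, Matrix.submatrix_apply,
    finSumFinEquiv_symm_apply_castAdd, finSumFinEquiv_symm_apply_natAdd]

lemma bd_nc (r m : ℕ) (A B) (i : Fin m) (j : Fin (2*r)) :
    _root_.blockDiag r m A B (Fin.natAdd (2*r) i) (Fin.castAdd m j) = 0 := by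
  simp [_root_.blockDiag, Matrix.reindex_apply, Matrix.submatrix_apply,
    finSumFinEquiv_symm_apply_castAdd, finSumFinEquiv_symm_apply_natAdd]

lemma topLeft_bd (r m : ℕ) (A B) : topLeft r m (_root_.blockDiag r m A B) = A := by
  ext i j; exact bd_cc r m A B i j

lemma bd_mul (r m : ℕ) (A A' B B') :
    _root_.blockDiag r m A B * _root_.blockDiag r m A' B' = _root_.blockDiag r m (A * A') (B * B') := by
  unfold _root_.blockDiag
  simp only [Matrix.reindex_apply]
  rw [Matrix.submatrix_mul_equiv, Matrix.fromBlocks_multiply]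
  simp

lemma bd_transpose (r m : ℕ) (A B) :
    (_root_.blockDiag r m A B)ᵀ = _root_.blockDiag r m Aᵀ Bᵀ := by
  unfold _root_.blockDiag
  simp only [Matrix.reindex_apply, Matrix.transpose_submatrix, Matrix.fromBlocks_transpose]
  simp

lemma bd_one (r m : ℕ) : _root_.blockDiag r m 1 1 = 1 := by
  unfold _root_.blockDiag
  rw [Matrix.fromBlocks_one]
  simp [Matrix.reindex_apply, Matrix.submatrix_one_equiv]

lemma topLeft_mul_left (r m : ℕ) (A B) (M : Matrix (Fin (2*r+m)) (Fin (2*r+m)) ℝ) :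
    topLeft r m (_root_.blockDiag r m A B * M) = A * topLeft r m M := by
  ext i j
  simp only [topLeft, Matrix.mul_apply]
  rw [Fin.sum_univ_add]
  simp [bd_cc, bd_cn]

lemma topLeft_mul_right (r m : ℕ) (A B) (M : Matrix (Fin (2*r+m)) (Fin (2*r+m)) ℝ) :
    topLeft r m (M * _root_.blockDiag r m A B) = topLeft r m M * A := by
  ext i j
  simp only [topLeft, Matrix.mul_apply]
  rw [Fin.sum_univ_add]
  simp [bd_cc, bd_nc]

lemma topLeft_sub (r m : ℕ) (M N) : topLeft r m (M - N) = topLeft r m M - topLeft r m N := rfl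

lemma topLeft_smul (r m : ℕ) (c : ℝ) (M) : topLeft r m (c • M) = c • topLeft r m M := rfl

lemma cols1_mul (r m : ℕ) (U V W : Matrix (Fin (2*r+m)) (Fin (2*r+m)) ℝ) :
    (cols1 r m U)ᵀ * W * cols1 r m V = topLeft r m (Uᵀ * W * V) := by
  ext i j
  simp only [topLeft, Matrix.mul_apply, Matrix.transpose_apply, cols1, Finset.sum_mul,
    Finset.mul_sum]

lemma chain_of_lt {n : Type*} [Fintype n] [DecidableEq n]
    (W : ℕ → Matrix n n ℝ) {i j : ℕ} (h : j < i) : chain W i j = 1 := by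
  unfold chain
  have : j + 1 - i = 0 := by omega
  rw [this]; rfl

lemma chain_succ {n : Type*} [Fintype n] [DecidableEq n]
    (W : ℕ → Matrix n n ℝ) {i j : ℕ} (h : i ≤ j + 1) :
    chain W i (j + 1) = W (j + 1) * chain W i j := by
  unfold chain
  have h1 : j + 1 + 1 - i = (j + 1 - i) + 1 := by omega
  rw [h1]
  show W (i + (j + 1 - i)) * _ = _
  have h2 : i + (j + 1 - i) = j + 1 := by omega
  rw [h2]

lemma chainAux_congr {n : Type*} [Fintype n] [DecidableEq n]
    (W W' : ℕ → Matrix n n ℝ) (i : ℕ) (k : ℕ) (h : ∀ s < k, W (i + s) = W' (i + s)) :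
    chainAux W i k = chainAux W' i k := by
  induction k with
  | zero => rfl
  | succ k ih =>
    show W (i+k) * _ = W' (i+k) * _
    rw [h k (by omega), ih (fun s hs => h s (by omega))]

lemma chain_congr {n : Type*} [Fintype n] [DecidableEq n]
    (W W' : ℕ → Matrix n n ℝ) (i j : ℕ) (h : ∀ k, i ≤ k → k ≤ j → W k = W' k) :
    chain W i j = chain W' i j := by
  apply chainAux_congr
  intro s hs
  exact h (i + s) (by omega) (by omega)

lemma mulCancelLeft {n : Type*} [Fintype n] [DecidableEq n]
    {A B : Matrix n n ℝ} (h : A * B = 1) (X : Matrix n n ℝ) :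
    A * (B * X) = X := by
  rw [← Matrix.mul_assoc, h, Matrix.one_mul]

lemma conj_sub_smul {n : Type*} [Fintype n] [DecidableEq n]
    (P Q X Y : Matrix n n ℝ) (a b : ℝ) :
    P * (a • X - b • Y) * Q = a • (P * X * Q) - b • (P * Y * Q) := by
  simp only [Matrix.mul_sub, Matrix.sub_mul, mul_smul_comm, smul_mul_assoc]

lemma chainDecomp (r m L : ℕ)
    (W : ℕ → Matrix (Fin (2*r+m)) (Fin (2*r+m)) ℝ)
    (U V : ℕ → Matrix (Fin (2*r+m)) (Fin (2*r+m)) ℝ)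
    (Wt : ℕ → Matrix (Fin (2*r)) (Fin (2*r)) ℝ)
    (ρ : ℕ → ℝ)
    (hV : ∀ l, 1 ≤ l → l ≤ L → (V l)ᵀ * V l = 1 ∧ V l * (V l)ᵀ = 1)
    (hUV : ∀ l, 1 ≤ l → l + 1 ≤ L → V (l+1) = U l)
    (hW : ∀ l, 1 ≤ l → l ≤ L →
      W l = U l * _root_.blockDiag r m (Wt l) (ρ l • 1) * (V l)ᵀ) :
    ∀ j i, 1 ≤ i → i ≤ L → i ≤ j + 1 → j ≤ L →
      ∃ B, chain W i j
        = (if i ≤ j then U j else V i) * _root_.blockDiag r m (chain Wt i j) B * (V i)ᵀ := by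
  intro j
  induction j with
  | zero =>
    intro i h1 h2 h3 _
    -- i = 1, j = 0 : empty chain
    have hi : i = 1 := by omega
    subst hi
    refine ⟨1, ?_⟩
    rw [if_neg (by omega), chain_of_lt W (by omega), chain_of_lt Wt (by omega),
      bd_one, Matrix.mul_one, (hV 1 le_rfl (by omega)).2]
  | succ j ih =>
    intro i h1 h2 h3 h4
    by_cases hempty : j + 1 < i
    · -- empty chain
      refine ⟨1, ?_⟩
      rw [if_neg (by omega), chain_of_lt W (by omega), chain_of_lt Wt (by omega),
        bd_one, Matrix.mul_one, (hV i h1 h2).2]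
    by_cases hij : i ≤ j
    · -- nonempty tail
      obtain ⟨B, hB⟩ := ih i h1 h2 (by omega) (by omega)
      rw [if_pos hij] at hB
      refine ⟨(ρ (j+1) • 1) * B, ?_⟩
      rw [if_pos (by omega), chain_succ W (by omega), chain_succ Wt (by omega), hB,
        hW (j+1) (by omega) h4]
      have hVU : V (j+1) = U j := hUV j (by omega) h4
      have h5 : (V (j+1))ᵀ * U j = 1 := by
        rw [← hVU]; exact (hV (j+1) (by omega) h4).1
      calc U (j+1) * _root_.blockDiag r m (Wt (j+1)) (ρ (j+1) • 1) * (V (j+1))ᵀ *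
            (U j * _root_.blockDiag r m (chain Wt i j) B * (V i)ᵀ)
          = U (j+1) * _root_.blockDiag r m (Wt (j+1)) (ρ (j+1) • 1) *
            (((V (j+1))ᵀ * U j) * (_root_.blockDiag r m (chain Wt i j) B * (V i)ᵀ)) := by
            simp only [Matrix.mul_assoc]
        _ = U (j+1) * (_root_.blockDiag r m (Wt (j+1)) (ρ (j+1) • 1) *
              _root_.blockDiag r m (chain Wt i j) B) * (V i)ᵀ := by
            rw [h5, Matrix.one_mul]; simp only [Matrix.mul_assoc]
        _ = U (j+1) * _root_.blockDiag r m (Wt (j+1) * chain Wt i j) ((ρ (j+1) • 1) * B) *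
              (V i)ᵀ := by rw [bd_mul]
    · -- i = j + 1 : single-step from empty
      have hi : i = j + 1 := by omega
      subst hi
      refine ⟨ρ (j+1) • 1, ?_⟩
      rw [if_pos le_rfl, chain_succ W (by omega), chain_succ Wt (by omega),
        chain_of_lt W (by omega), chain_of_lt Wt (by omega), Matrix.mul_one, Matrix.mul_one,
        hW (j+1) (by omega) h4]

/-- the compressed iterates track the original trajectory exactly:
`Ŵ_l(t) = U_{l,1}ᵀ·W_l(t)·V_{l,1} = W̃_l(t)` for all `l ∈ {1,…,L}` and `t ≥ 0`. -/
theorem statement11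
    (r m : ℕ) (hm : 0 < m) (L : ℕ) (hL : 1 ≤ L)
    (Φ : Matrix (Fin (2*r + m)) (Fin (2*r + m)) ℝ) (hΦ : Φ.rank ≤ r)
    (ε : ℕ → ℝ) (hε : ∀ l, 1 ≤ l → l ≤ L → 0 < ε l)
    (η lam : ℝ) (hη : 0 < η) (hlam : 0 ≤ lam)
    (W : ℕ → ℕ → Matrix (Fin (2*r + m)) (Fin (2*r + m)) ℝ)
    (hW0 : ∀ l, 1 ≤ l → l ≤ L →
      W 0 l * (W 0 l)ᵀ = (ε l)^2 • (1 : Matrix (Fin (2*r + m)) (Fin (2*r + m)) ℝ) ∧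
      (W 0 l)ᵀ * W 0 l = (ε l)^2 • (1 : Matrix (Fin (2*r + m)) (Fin (2*r + m)) ℝ))
    (hWupd : ∀ t l, 1 ≤ l → l ≤ L →
      W (t+1) l = (1 - η * lam) • W t l
        - η • ((chain (W t) (l+1) L)ᵀ * (chain (W t) 1 L - Φ) * (chain (W t) 1 (l-1))ᵀ))
    (ρ : ℕ → ℕ → ℝ)
    (hρ0 : ∀ l, ρ 0 l = ε l)
    (hρ : ∀ t l, ρ (t+1) l
      = ρ t l * (1 - η * lam - η * ∏ k ∈ (Finset.Icc 1 L).erase l, (ρ t k)^2))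
    -- the block-diagonal decomposition hypothesis
    (U V : ℕ → Matrix (Fin (2*r + m)) (Fin (2*r + m)) ℝ)
    (hU : ∀ l, 1 ≤ l → l ≤ L → ((U l)ᵀ * U l = 1 ∧ U l * (U l)ᵀ = 1))
    (hV : ∀ l, 1 ≤ l → l ≤ L → ((V l)ᵀ * V l = 1 ∧ V l * (V l)ᵀ = 1))
    (hUV : ∀ l, 1 ≤ l → l + 1 ≤ L → V (l+1) = U l)
    (Wtil : ℕ → ℕ → Matrix (Fin (2*r)) (Fin (2*r)) ℝ)
    (hdecomp : ∀ t l, 1 ≤ l → l ≤ L →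
      (U l)ᵀ * W t l * V l = blockDiag r m (Wtil t l) (ρ t l • 1))
    (hWtil0 : ∀ l, 1 ≤ l → l ≤ L → Wtil 0 l = ε l • 1)
    -- the compressed iterates
    (What : ℕ → ℕ → Matrix (Fin (2*r)) (Fin (2*r)) ℝ)
    (hWhat0 : ∀ l, 1 ≤ l → l ≤ L → What 0 l = ε l • 1)
    (hWhatupd : ∀ t l, 1 ≤ l → l ≤ L →
      What (t+1) l = (1 - η * lam) • What t l
        - η • ((chain (What t) (l+1) L)ᵀ
            * (chain (What t) 1 L - (cols1 r m (U L))ᵀ * Φ * cols1 r m (V 1))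
            * (chain (What t) 1 (l-1))ᵀ)) :
    ∀ l, 1 ≤ l → l ≤ L → ∀ t : ℕ,
      What t l = (cols1 r m (U l))ᵀ * W t l * cols1 r m (V l) ∧
      What t l = Wtil t l := by
  have hVs : ∀ k, 1 ≤ k → k ≤ L → (V k)ᵀ * V k = 1 ∧ V k * (V k)ᵀ = 1 :=
    fun k a b => ⟨(hV k a b).1, (hV k a b).2⟩
  have key : ∀ t, ∀ l, 1 ≤ l → l ≤ L → What t l = Wtil t l := by
    intro t
    induction t with
    | zero => intro l h1 h2; rw [hWhat0 l h1 h2, hWtil0 l h1 h2]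
    | succ t ih =>
      intro l h1 h2
      have hWfact : ∀ k, 1 ≤ k → k ≤ L →
          W t k = U k * blockDiag r m (Wtil t k) (ρ t k • 1) * (V k)ᵀ := by
        intro k hk1 hk2
        have hd := hdecomp t k hk1 hk2
        have h5 : U k * ((U k)ᵀ * W t k * V k) * (V k)ᵀ = W t k := by
          calc U k * ((U k)ᵀ * W t k * V k) * (V k)ᵀ
              = (U k * (U k)ᵀ) * (W t k * (V k * (V k)ᵀ)) := by
                simp only [Matrix.mul_assoc]
            _ = W t k := by
                rw [(hU k hk1 hk2).2, (hV k hk1 hk2).2, Matrix.one_mul, Matrix.mul_one]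
        rw [← h5, hd]
      obtain ⟨B, hB⟩ := chainDecomp r m L (W t) U V (Wtil t) (ρ t) hVs hUV hWfact
        L 1 le_rfl hL (by omega) le_rfl
      rw [if_pos hL] at hB
      have hC1 : ∃ B1, chain (W t) 1 (l-1)
          = V l * blockDiag r m (chain (Wtil t) 1 (l-1)) B1 * (V 1)ᵀ := by
        obtain ⟨B1, hB1⟩ := chainDecomp r m L (W t) U V (Wtil t) (ρ t) hVs hUV hWfact
          (l-1) 1 le_rfl hL (by omega) (by omega)
        by_cases h : 1 ≤ l - 1
        · rw [if_pos h] at hB1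
          have hUVl : U (l-1) = V l := by
            have h6 := hUV (l-1) h (by omega)
            rw [show l - 1 + 1 = l by omega] at h6
            exact h6.symm
          exact ⟨B1, by rw [← hUVl]; exact hB1⟩
        · have hl1 : l = 1 := by omega
          rw [if_neg h] at hB1
          exact ⟨B1, by rw [hl1]; rw [hl1] at hB1; exact hB1⟩
      obtain ⟨B1, hB1⟩ := hC1
      have hC2 : ∃ B2, chain (W t) (l+1) L
          = U L * blockDiag r m (chain (Wtil t) (l+1) L) B2 * (U l)ᵀ := by
        by_cases h : l + 1 ≤ L
        · obtain ⟨B2, hB2⟩ := chainDecomp r m L (W t) U V (Wtil t) (ρ t) hVs hUV hWfact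
            L (l+1) (by omega) h (by omega) le_rfl
          rw [if_pos h, hUV l h1 h] at hB2
          exact ⟨B2, hB2⟩
        · have hlL : l = L := by omega
          refine ⟨1, ?_⟩
          rw [hlL, chain_of_lt (W t) (by omega), chain_of_lt (Wtil t) (by omega),
            bd_one, Matrix.mul_one]
          exact ((hU L hL le_rfl).2).symm
      obtain ⟨B2, hB2⟩ := hC2
      have hUl := (hU l h1 h2).1
      have hVl := (hV l h1 h2).1
      have hUL := (hU L hL le_rfl).1
      have hV1 := (hV 1 le_rfl hL).1
      -- the middle term
      have hinner : (U L)ᵀ * (chain (W t) 1 L - Φ) * V 1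
          = _root_.blockDiag r m (chain (Wtil t) 1 L) B - (U L)ᵀ * Φ * V 1 := by
        rw [Matrix.mul_sub, Matrix.sub_mul]
        congr 1
        rw [hB]
        simp only [Matrix.mul_assoc]
        rw [hV1, Matrix.mul_one, mulCancelLeft hUL]
      have hmid : (U l)ᵀ * ((chain (W t) (l+1) L)ᵀ * (chain (W t) 1 L - Φ)
            * (chain (W t) 1 (l-1))ᵀ) * V l
          = (_root_.blockDiag r m (chain (Wtil t) (l+1) L) B2)ᵀ
            * ((U L)ᵀ * (chain (W t) 1 L - Φ) * V 1)
            * (_root_.blockDiag r m (chain (Wtil t) 1 (l-1)) B1)ᵀ := by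
        rw [hB1, hB2]
        simp only [Matrix.transpose_mul, Matrix.transpose_transpose, Matrix.mul_assoc]
        rw [hVl, Matrix.mul_one, mulCancelLeft hUl]
      -- expression for Wtil (t+1) l
      have hT : Wtil (t+1) l = topLeft r m ((U l)ᵀ * W (t+1) l * V l) := by
        rw [hdecomp (t+1) l h1 h2, topLeft_bd]
      have hTt : topLeft r m ((U l)ᵀ * W t l * V l) = Wtil t l := by
        rw [hdecomp t l h1 h2, topLeft_bd]
      have hX : (U l)ᵀ * W (t+1) l * V l
          = (1 - η*lam) • ((U l)ᵀ * W t l * V l)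
            - η • ((_root_.blockDiag r m (chain (Wtil t) (l+1) L) B2)ᵀ
              * (_root_.blockDiag r m (chain (Wtil t) 1 L) B - (U L)ᵀ * Φ * V 1)
              * (_root_.blockDiag r m (chain (Wtil t) 1 (l-1)) B1)ᵀ) := by
        rw [hWupd t l h1 h2, conj_sub_smul, hmid, hinner]
      -- compute topLeft of the product
      have hTL : topLeft r m ((blockDiag r m (chain (Wtil t) (l+1) L) B2)ᵀ
              * (blockDiag r m (chain (Wtil t) 1 L) B - (U L)ᵀ * Φ * V 1)
              * (blockDiag r m (chain (Wtil t) 1 (l-1)) B1)ᵀ)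
          = (chain (Wtil t) (l+1) L)ᵀ
            * (chain (Wtil t) 1 L - (cols1 r m (U L))ᵀ * Φ * cols1 r m (V 1))
            * (chain (Wtil t) 1 (l-1))ᵀ := by
        rw [bd_transpose, bd_transpose, Matrix.mul_assoc,
          topLeft_mul_left, topLeft_mul_right, topLeft_sub, topLeft_bd,
          cols1_mul]
        simp only [Matrix.mul_assoc]
      rw [hWhatupd t l h1 h2, ih l h1 h2,
        chain_congr (What t) (Wtil t) (l+1) L (fun k hk1 hk2 => ih k (by omega) hk2),
        chain_congr (What t) (Wtil t) 1 L (fun k hk1 hk2 => ih k hk1 hk2),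
        chain_congr (What t) (Wtil t) 1 (l-1) (fun k hk1 hk2 => ih k hk1 (by omega)),
        hT, hX, topLeft_sub, topLeft_smul, topLeft_smul, hTt, hTL]
  intro l h1 h2 t
  refine ⟨?_, key t l h1 h2⟩
  rw [key t l h1 h2, cols1_mul, hdecomp t l h1 h2, topLeft_bd]
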